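/- arXiv:1409.2667 — 6 statements merged into one kernel-verified Lean document; each statement's English description precedes it below -/
import Mathlib

section
/- Let 0 < a < 2 and let f : ℕ × ℕ → ℂ be the discrete Z^a. Then for every n ≥ 1 the value f(n,0) is a positive real number, and for every m ≥ 1 there exists a positive real number t such that f(0,m) = exp(iaπ/2)·t. -/
/-- `f : ℕ × ℕ → ℂ` is the discrete `Z^a`: it satisfies the cross-ratio equation
(with all four differences around each unit square nonzero), the nonautonomous
constraint (interior version for `n, m ≥ 1`, boundary versions with the `2n`-term
omitted when `n = 0` and the `2m`-term omitted when `m = 0`), and the initial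
conditions `f(0,0) = 0`, `f(1,0) = 1`, `f(0,1) = exp(iaπ/2)`. -/
def IsDiscreteZa (a : ℝ) (f : ℕ × ℕ → ℂ) : Prop :=
  (∀ n m : ℕ,
    f (n + 1, m) - f (n, m) ≠ 0 ∧ f (n, m + 1) - f (n, m) ≠ 0 ∧
    f (n + 1, m + 1) - f (n + 1, m) ≠ 0 ∧ f (n + 1, m + 1) - f (n, m + 1) ≠ 0 ∧
    (f (n, m) - f (n + 1, m)) * (f (n + 1, m + 1) - f (n, m + 1)) =
      -((f (n + 1, m) - f (n + 1, m + 1)) * (f (n, m + 1) - f (n, m)))) ∧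
  (∀ n m : ℕ,
    f (n + 2, m + 1) ≠ f (n, m + 1) ∧ f (n + 1, m + 2) ≠ f (n + 1, m) ∧
    (a : ℂ) * f (n + 1, m + 1) =
      (2 * (n + 1) : ℂ) *
          ((f (n + 2, m + 1) - f (n + 1, m + 1)) * (f (n + 1, m + 1) - f (n, m + 1))) /
          (f (n + 2, m + 1) - f (n, m + 1)) +
        (2 * (m + 1) : ℂ) *
          ((f (n + 1, m + 2) - f (n + 1, m + 1)) * (f (n + 1, m + 1) - f (n + 1, m))) /
          (f (n + 1, m + 2) - f (n + 1, m))) ∧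
  (∀ n : ℕ,
    f (n + 2, 0) ≠ f (n, 0) ∧
    (a : ℂ) * f (n + 1, 0) =
      (2 * (n + 1) : ℂ) * ((f (n + 2, 0) - f (n + 1, 0)) * (f (n + 1, 0) - f (n, 0))) /
        (f (n + 2, 0) - f (n, 0))) ∧
  (∀ m : ℕ,
    f (0, m + 2) ≠ f (0, m) ∧
    (a : ℂ) * f (0, m + 1) =
      (2 * (m + 1) : ℂ) * ((f (0, m + 2) - f (0, m + 1)) * (f (0, m + 1) - f (0, m))) /
        (f (0, m + 2) - f (0, m))) ∧
  (a : ℂ) * f (0, 0) = 0 ∧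
  f (0, 0) = 0 ∧ f (1, 0) = 1 ∧
  f (0, 1) = Complex.exp (Complex.I * (a : ℂ) * (Real.pi : ℂ) / 2)

/-!
On each boundary axis the constraint reduces to the three-term recurrence
`a x_{n+1} = 2(n+1) (x_{n+2} - x_{n+1}) (x_{n+1} - x_n) / (x_{n+2} - x_n)`, which is homogeneous of
degree one, so after dividing the `m`-axis by `e^{iaπ/2}` both axes start from `0, 1`.
Solving the recurrence for `x_{n+2}` shows that real values stay real, and by induction
`0 ≤ x_n < x_{n+1}` together with `a x_{n+1} < 2(n+1)(x_{n+1} - x_n)`; the latter keeps the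
denominator of the next step positive, and it holds initially because `a < 2`.
-/

def AxisRecurrence (a : ℝ) (x : ℕ → ℂ) : Prop :=
  ∀ n : ℕ, x (n + 2) ≠ x n ∧
    (a : ℂ) * x (n + 1) =
      (2 * (n + 1) : ℂ) * ((x (n + 2) - x (n + 1)) * (x (n + 1) - x n)) / (x (n + 2) - x n)

theorem lt_and_lt_of_recurrence_step {a s t u N : ℝ} (ha : 0 < a) (hs : 0 ≤ s) (hst : s < t)
    (hinv : a * t < 2 * N * (t - s))
    (hu : a * t * (u - s) = 2 * N * (u - t) * (t - s)) :
    t < u ∧ a * u < 2 * (N + 1) * (u - t) := by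
  have hE : 0 < 2 * N * (t - s) - a * t := sub_pos.mpr hinv
  have hat : 0 < a * t := mul_pos ha (hs.trans_lt hst)
  have hut : (u - t) * (2 * N * (t - s) - a * t) = a * t * (t - s) := by linear_combination -hu
  have htu : t < u := by
    by_contra! hle
    nlinarith [mul_nonpos_of_nonpos_of_nonneg (sub_nonpos.mpr hle) hE.le,
      mul_pos hat (sub_pos.mpr hst)]
  refine ⟨htu, ?_⟩
  have hkey : (2 * (N + 1) * (u - t) - a * u) * (2 * N * (t - s) - a * t) =
      a * t * (2 * (t - s) + a * s) := by
    linear_combination (2 * (N + 1) - a) * hut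
  have hpos : 0 < a * t * (2 * (t - s) + a * s) :=
    mul_pos hat (by nlinarith [mul_nonneg ha.le hs])
  exact sub_pos.mp (pos_of_mul_pos_left (hkey ▸ hpos) hE.le)

namespace AxisRecurrence

variable {a : ℝ} {x : ℕ → ℂ}

theorem const_mul (h : AxisRecurrence a x) {c : ℂ} (hc : c ≠ 0) :
    AxisRecurrence a (fun n => c * x n) := by
  intro n
  obtain ⟨hne, heq⟩ := h n
  refine ⟨fun hc' => hne (mul_left_cancel₀ hc hc'), ?_⟩
  simp only [← mul_sub]
  rw [mul_left_comm, heq]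
  field_simp

theorem exists_ofReal_succ_succ (h : AxisRecurrence a x) {n : ℕ} {s t : ℝ}
    (hs : x n = s) (ht : x (n + 1) = t) (hD : a * t ≠ 2 * (n + 1) * (t - s)) :
    ∃ u : ℝ, x (n + 2) = u ∧ a * t * (u - s) = 2 * (n + 1) * (u - t) * (t - s) := by
  obtain ⟨hne, heq⟩ := h n
  rw [eq_div_iff (sub_ne_zero.mpr hne), hs, ht] at heq
  have hD' : ((a * t - 2 * (n + 1) * (t - s) : ℝ) : ℂ) ≠ 0 := by
    exact_mod_cast sub_ne_zero.mpr hD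
  set u : ℝ := (a * t * s - 2 * (n + 1) * (t - s) * t) / (a * t - 2 * (n + 1) * (t - s))
  have hu : x (n + 2) = u := by
    simp only [u, Complex.ofReal_div]
    rw [eq_div_iff hD']
    push_cast
    linear_combination heq
  refine ⟨u, hu, ?_⟩
  rw [hu] at heq
  have hC : ((a * t * (u - s) : ℝ) : ℂ) = ((2 * (n + 1) * (u - t) * (t - s) : ℝ) : ℂ) := by
    push_cast
    linear_combination heq
  exact_mod_cast hC

theorem exists_ofReal_lt_ofReal (h : AxisRecurrence a x) (ha : 0 < a) (ha2 : a < 2)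
    (h0 : x 0 = 0) (h1 : x 1 = 1) (n : ℕ) :
    ∃ s t : ℝ, x n = s ∧ x (n + 1) = t ∧ 0 ≤ s ∧ s < t ∧ a * t < 2 * (n + 1) * (t - s) := by
  induction n with
  | zero => exact ⟨0, 1, by simpa using h0, by simpa using h1, le_rfl, one_pos, by simpa using ha2⟩
  | succ n ih =>
    obtain ⟨s, t, hs, ht, hs0, hst, hinv⟩ := ih
    obtain ⟨u, hu, hrec⟩ := h.exists_ofReal_succ_succ hs ht hinv.ne
    obtain ⟨htu, hinv'⟩ := lt_and_lt_of_recurrence_step ha hs0 hst hinv hrec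
    exact ⟨t, u, ht, hu, hs0.trans hst.le, htu, by push_cast; linarith⟩

theorem exists_pos_ofReal (h : AxisRecurrence a x) (ha : 0 < a) (ha2 : a < 2)
    (h0 : x 0 = 0) (h1 : x 1 = 1) {n : ℕ} (hn : 1 ≤ n) : ∃ t : ℝ, 0 < t ∧ x n = t := by
  obtain ⟨n, rfl⟩ := Nat.exists_eq_add_of_le' hn
  obtain ⟨s, t, -, ht, hs0, hst, -⟩ := h.exists_ofReal_lt_ofReal ha ha2 h0 h1 n
  exact ⟨t, hs0.trans_lt hst, ht⟩

end AxisRecurrence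

/-- The discrete `Z^a` maps the boundary axes into the rays `ℝ₊` and `e^{iaπ/2}ℝ₊`:
`Z^a(n,0)` is a positive real for `n ≥ 1`, and `Z^a(0,m) = e^{iaπ/2} t` with `t > 0`
for `m ≥ 1`. -/
theorem discrete_Za_boundary (a : ℝ) (ha : 0 < a) (ha2 : a < 2)
    (f : ℕ × ℕ → ℂ) (hf : IsDiscreteZa a f) :
    (∀ n : ℕ, 1 ≤ n → ∃ t : ℝ, 0 < t ∧ f (n, 0) = (t : ℂ)) ∧
    (∀ m : ℕ, 1 ≤ m → ∃ t : ℝ, 0 < t ∧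
      f (0, m) = Complex.exp (Complex.I * (a : ℂ) * (Real.pi : ℂ) / 2) * (t : ℂ)) := by
  obtain ⟨-, -, hrow, hcol, -, hf00, hf10, hf01⟩ := hf
  set c := Complex.exp (Complex.I * (a : ℂ) * (Real.pi : ℂ) / 2)
  have hc : c ≠ 0 := Complex.exp_ne_zero _
  refine ⟨fun n hn => AxisRecurrence.exists_pos_ofReal (x := fun n => f (n, 0))
    hrow ha ha2 hf00 hf10 hn, fun m hm => ?_⟩
  have hcol' : AxisRecurrence a (fun m => c⁻¹ * f (0, m)) :=
    AxisRecurrence.const_mul (x := fun m => f (0, m)) hcol (inv_ne_zero hc)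
  obtain ⟨t, ht, hmt⟩ := hcol'.exists_pos_ofReal ha ha2 (by simp [hf00]) (by simp [hf01, hc]) hm
  refine ⟨t, ht, ?_⟩
  rw [← hmt, mul_inv_cancel_left₀ hc]
end

section
/- Let w, x, y, z ∈ ℂ be such that x − w, y − z, z − w, y − x are all nonzero. Then the cross-ratio condition (w − x)·(y − z) = −(x − y)·(z − w) holds if and only if for all λ ∈ ℂ one has the 2×2 matrix identity U(λ; y − z)·V(λ; z − w) = V(λ; y − x)·U(λ; x − w). (Here w, x, y, z play the roles of f(n,m), f(n+1,m), f(n+1,m+1), f(n,m+1), so this says that the cross-ratio equation is exactly the compatibility condition U_{n,m+1}(λ)V_{n,m}(λ) = V_{n+1,m}(λ)U_{n,m}(λ) of the Lax pair.) -/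
/-!
Write `u, v, u', v'` for the edge differences `y - z, z - w, x - w, y - x`, so that
`u + v = u' + v'`. Both sides of the compatibility condition are affine in `λ` with the same
constant part `[[1, -(u + v)], [0, 1]]`, and after clearing denominators every entry of their
difference is `λ` times a multiple of `u u' + v v'`; the cross-ratio equation says exactly that
`u u' + v v' = 0`.
-/

noncomputable def LaxU (l u : ℂ) : Matrix (Fin 2) (Fin 2) ℂ := !![1, -u; l / u, 1]

noncomputable def LaxV (l v : ℂ) : Matrix (Fin 2) (Fin 2) ℂ := !![1, -v; -(l / v), 1]

theorem laxU_mul_laxV (l u v : ℂ) :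
    LaxU l u * LaxV l v = !![1 + l * u / v, -(u + v); l / u - l / v, 1 - l * v / u] := by
  rw [LaxU, LaxV, Matrix.mul_fin_two]
  simp only [EmbeddingLike.apply_eq_iff_eq, Matrix.vecCons_inj, and_true]
  refine ⟨⟨?_, ?_⟩, ?_, ?_⟩ <;> ring

theorem laxV_mul_laxU (l u v : ℂ) :
    LaxV l v * LaxU l u = !![1 - l * v / u, -(u + v); l / u - l / v, 1 + l * u / v] := by
  rw [LaxU, LaxV, Matrix.mul_fin_two]
  simp only [EmbeddingLike.apply_eq_iff_eq, Matrix.vecCons_inj, and_true]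
  refine ⟨⟨?_, ?_⟩, ?_, ?_⟩ <;> ring

theorem laxU_mul_laxV_eq_laxV_mul_laxU_iff {u v u' v' : ℂ} (hu : u ≠ 0) (hv : v ≠ 0)
    (hu' : u' ≠ 0) (hv' : v' ≠ 0) (hsum : u + v = u' + v') :
    (∀ l, LaxU l u * LaxV l v = LaxV l v' * LaxU l u') ↔ u * u' + v * v' = 0 := by
  simp only [laxU_mul_laxV, laxV_mul_laxU, EmbeddingLike.apply_eq_iff_eq, Matrix.vecCons_inj,
    and_true]
  constructor
  · intro h
    have h00 := (h 1).1.1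
    field_simp at h00
    linear_combination h00
  · intro h l
    obtain rfl : v' = u + v - u' := by linear_combination -hsum
    refine ⟨⟨?_, by ring⟩, ?_, ?_⟩
    · field_simp
      linear_combination l * h
    · field_simp
      linear_combination (l * (u' - u)) * h
    · field_simp
      linear_combination (-l) * h

/-- The cross-ratio equation `(w-x)(y-z) = -(x-y)(z-w)` holds iff the Lax compatibility
condition `U(λ; y-z) V(λ; z-w) = V(λ; y-x) U(λ; x-w)` holds for all `λ`.  Here
`w, x, y, z` play the roles of `f_{n,m}, f_{n+1,m}, f_{n+1,m+1}, f_{n,m+1}`. -/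
theorem crossRatio_iff_lax_compatibility (w x y z : ℂ)
    (h1 : x - w ≠ 0) (h2 : y - z ≠ 0) (h3 : z - w ≠ 0) (h4 : y - x ≠ 0) :
    ((w - x) * (y - z) = -((x - y) * (z - w))) ↔
    (∀ l : ℂ, LaxU l (y - z) * LaxV l (z - w) = LaxV l (y - x) * LaxU l (x - w)) := by
  rw [laxU_mul_laxV_eq_laxV_mul_laxU_iff h2 h3 h1 h4 (by ring)]
  constructor <;> intro h <;> linear_combination -h
end

section
/- Let n, m ≥ 0 with n + m ≥ 1, and let u_0, …, u_{n−1}, v_0, …, v_{m−1} be nonzero complex numbers. Let P(λ) = U(λ; u_{n−1})···U(λ; u_0)·V(λ; v_{m−1})···V(λ; v_0), so that each entry of P is a polynomial in λ. If n + m = 2k is even, then deg P₁₁ ≤ k, deg P₂₁ ≤ k, deg P₂₂ ≤ k, deg P₁₂ ≤ k − 1, and the coefficients of λ^k in P₁₁ and in P₂₂ satisfy (coeff of λ^k in P₁₁)·(coeff of λ^k in P₂₂) = (−1)^m; in particular both are nonzero. If n + m = 2k + 1 is odd, then deg P₁₁ ≤ k, deg P₁₂ ≤ k, deg P₂₂ ≤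 k, deg P₂₁ ≤ k + 1, and (coeff of λ^k in P₁₂)·(coeff of λ^{k+1} in P₂₁) = (−1)^{m+1}; in particular both are nonzero. (This is the degree and leading-coefficient structure of the wave function Ψ_{n,m}(λ)·λ^{(a/4)σ₃} at λ = ∞.) -/
/-!
Both `U(λ; u)` and `V(λ; v)` have the shape `[[1, a], [bλ, 1]]`, with `ab = -1` for `U` and
`ab = 1` for `V`. Left multiplication by such a factor raises the degree bound of the top-right
or bottom-left entry by one, alternating between two degree patterns according to the parity of
the number of factors, and multiplies the product of the two top-degree coefficients that
matter in each pattern by `ab`. Starting from the identity this product is `(-1)^n`, which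
equals `(-1)^m` resp. `(-1)^(m+1)` by the parity of `n + m`.
-/

open Polynomial

/-- The Lax matrix `U(λ; u) = [[1, -u], [λ/u, 1]]` with polynomial entries in `λ`. -/
noncomputable def UPoly (u : ℂ) : Matrix (Fin 2) (Fin 2) (Polynomial ℂ) :=
  !![1, C (-u); C u⁻¹ * X, 1]

/-- The Lax matrix `V(λ; v) = [[1, -v], [-λ/v, 1]]` with polynomial entries in `λ`. -/
noncomputable def VPoly (v : ℂ) : Matrix (Fin 2) (Fin 2) (Polynomial ℂ) :=
  !![1, C (-v); C (-v⁻¹) * X, 1]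

/-- The product `U(λ; u_{n-1}) ⋯ U(λ; u_0)`. -/
noncomputable def UProdPoly (u : ℕ → ℂ) : ℕ → Matrix (Fin 2) (Fin 2) (Polynomial ℂ)
  | 0 => 1
  | n + 1 => UPoly (u n) * UProdPoly u n

/-- The product `V(λ; v_{m-1}) ⋯ V(λ; v_0)`. -/
noncomputable def VProdPoly (v : ℕ → ℂ) : ℕ → Matrix (Fin 2) (Fin 2) (Polynomial ℂ)
  | 0 => 1
  | m + 1 => VPoly (v m) * VProdPoly v m

namespace LaxProduct

variable {R : Type*} [CommRing R]

noncomputable def factor (a b : R) : Matrix (Fin 2) (Fin 2) R[X] :=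
  !![1, C a; C b * X, 1]

section Entries

variable (a b : R) (M : Matrix (Fin 2) (Fin 2) R[X])

@[simp] lemma factor_mul_apply_zero_zero : (factor a b * M) 0 0 = M 0 0 + C a * M 1 0 := by
  simp [factor, Matrix.mul_apply]

@[simp] lemma factor_mul_apply_zero_one : (factor a b * M) 0 1 = M 0 1 + C a * M 1 1 := by
  simp [factor, Matrix.mul_apply]

@[simp] lemma factor_mul_apply_one_zero : (factor a b * M) 1 0 = C b * X * M 0 0 + M 1 0 := by
  simp [factor, Matrix.mul_apply]

@[simp] lemma factor_mul_apply_one_one : (factor a b * M) 1 1 = C b * X * M 0 1 + M 1 1 := by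
  simp [factor, Matrix.mul_apply]

end Entries

section Degree

variable {p q : R[X]}

lemma degree_add_C_mul_le {d : WithBot ℕ} (c : R) (hp : p.degree ≤ d) (hq : q.degree ≤ d) :
    (p + C c * q).degree ≤ d := by
  refine (degree_add_le _ _).trans (max_le hp ?_)
  rw [← smul_eq_C_mul]
  exact (degree_smul_le c q).trans hq

lemma degree_C_mul_X_mul_le {d : WithBot ℕ} (c : R) (hp : p.degree + 1 ≤ d) :
    (C c * X * p).degree ≤ d :=
  calc (C c * X * p).degree ≤ (C c * X).degree + p.degree := degree_mul_le _ _
    _ ≤ 1 + p.degree := by gcongr; exact degree_C_mul_X_le c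
    _ ≤ d := by rwa [add_comm]

lemma degree_C_mul_X_mul_add_le {d : WithBot ℕ} (c : R) (hp : p.degree + 1 ≤ d)
    (hq : q.degree ≤ d) : (C c * X * p + q).degree ≤ d :=
  (degree_add_le _ _).trans (max_le (degree_C_mul_X_mul_le c hp) hq)

lemma coeff_C_mul_X_mul_add_succ (c : R) (i : ℕ) :
    (C c * X * p + q).coeff (i + 1) = c * p.coeff i + q.coeff (i + 1) := by
  rw [mul_assoc, coeff_add, coeff_C_mul, coeff_X_mul]

lemma degree_lt_succ_of_le {k : ℕ} (hp : p.degree ≤ k) : p.degree < (k + 1 : ℕ) :=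
  hp.trans_lt (by exact_mod_cast k.lt_succ_self)

lemma degree_le_pred_of_lt {k : ℕ} (hp : p.degree < k) : p.degree ≤ (k - 1 : ℕ) := by
  rw [degree_le_iff_coeff_zero]
  intro i hi
  have hki : k - 1 < i := by exact_mod_cast hi
  exact (degree_lt_iff_coeff_zero p k).mp hp i (by exact_mod_cast (by omega : k ≤ i))

end Degree

/-- The bound on `M 0 1` is strict rather than `≤ k - 1`, which would truncate at `k = 0`. -/
structure EvenShape (M : Matrix (Fin 2) (Fin 2) R[X]) (k : ℕ) (c : R) : Prop where
  degree_zero_zero : (M 0 0).degree ≤ k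
  degree_one_zero : (M 1 0).degree ≤ k
  degree_one_one : (M 1 1).degree ≤ k
  degree_zero_one : (M 0 1).degree < k
  coeff_mul_coeff : (M 0 0).coeff k * (M 1 1).coeff k = c

structure OddShape (M : Matrix (Fin 2) (Fin 2) R[X]) (k : ℕ) (c : R) : Prop where
  degree_zero_zero : (M 0 0).degree ≤ k
  degree_zero_one : (M 0 1).degree ≤ k
  degree_one_one : (M 1 1).degree ≤ k
  degree_one_zero : (M 1 0).degree ≤ (k + 1 : ℕ)
  coeff_mul_coeff : (M 0 1).coeff k * (M 1 0).coeff (k + 1) = c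

variable {M : Matrix (Fin 2) (Fin 2) R[X]} {k : ℕ} {c : R}

lemma EvenShape.factor_mul (h : EvenShape M k c) (a b : R) :
    OddShape (factor a b * M) k (a * b * c) where
  degree_zero_zero := by simpa using degree_add_C_mul_le a h.degree_zero_zero h.degree_one_zero
  degree_zero_one := by simpa using degree_add_C_mul_le a h.degree_zero_one.le h.degree_one_one
  degree_one_one := by
    simpa using degree_C_mul_X_mul_add_le b (Nat.WithBot.add_one_le_of_lt h.degree_zero_one)
      h.degree_one_one
  degree_one_zero := by
    simpa using degree_C_mul_X_mul_add_le b (by push_cast; gcongr; exact h.degree_zero_zero)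
      ((degree_lt_succ_of_le h.degree_one_zero).le)
  coeff_mul_coeff := by
    rw [factor_mul_apply_zero_one, factor_mul_apply_one_zero, coeff_add, coeff_C_mul,
      coeff_C_mul_X_mul_add_succ, coeff_eq_zero_of_degree_lt h.degree_zero_one,
      coeff_eq_zero_of_degree_lt (degree_lt_succ_of_le h.degree_one_zero), ← h.coeff_mul_coeff]
    ring

lemma OddShape.factor_mul (h : OddShape M k c) (a b : R) :
    EvenShape (factor a b * M) (k + 1) (a * b * c) where
  degree_zero_zero := by
    simpa using degree_add_C_mul_le a (degree_lt_succ_of_le h.degree_zero_zero).le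
      h.degree_one_zero
  degree_one_zero := by
    simpa using degree_C_mul_X_mul_add_le b (by push_cast; gcongr; exact h.degree_zero_zero)
      h.degree_one_zero
  degree_one_one := by
    simpa using degree_C_mul_X_mul_add_le b (by push_cast; gcongr; exact h.degree_zero_one)
      (degree_lt_succ_of_le h.degree_one_one).le
  degree_zero_one := by
    simpa using degree_lt_succ_of_le (degree_add_C_mul_le a h.degree_zero_one h.degree_one_one)
  coeff_mul_coeff := by
    rw [factor_mul_apply_zero_zero, factor_mul_apply_one_one, coeff_add, coeff_C_mul,
      coeff_C_mul_X_mul_add_succ,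
      coeff_eq_zero_of_degree_lt (degree_lt_succ_of_le h.degree_zero_zero),
      coeff_eq_zero_of_degree_lt (degree_lt_succ_of_le h.degree_one_one), ← h.coeff_mul_coeff]
    ring

def Shape (M : Matrix (Fin 2) (Fin 2) R[X]) (N : ℕ) (c : R) : Prop :=
  (∀ k, N = 2 * k → EvenShape M k c) ∧ (∀ k, N = 2 * k + 1 → OddShape M k c)

lemma shape_one : Shape (1 : Matrix (Fin 2) (Fin 2) R[X]) 0 1 := by
  refine ⟨fun k hk => ?_, fun k hk => by omega⟩
  obtain rfl : k = 0 := by omega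
  exact ⟨by simp, by simp, by simp, by simp, by simp⟩

lemma Shape.factor_mul {N : ℕ} (h : Shape M N c) (a b : R) :
    Shape (factor a b * M) (N + 1) (a * b * c) := by
  constructor
  · rintro (_ | k) hk
    · omega
    · exact (h.2 k (by omega)).factor_mul a b
  · intro k hk
    exact (h.1 k (by omega)).factor_mul a b

end LaxProduct

open LaxProduct

lemma UPoly_eq_factor (u : ℂ) : UPoly u = factor (-u) u⁻¹ := rfl

lemma VPoly_eq_factor (v : ℂ) : VPoly v = factor (-v) (-v⁻¹) := rfl

lemma shape_VProdPoly {v : ℕ → ℂ} {m : ℕ} (hv : ∀ k, k < m → v k ≠ 0) :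
    Shape (VProdPoly v m) m 1 := by
  induction m with
  | zero => exact shape_one
  | succ m ih =>
    have h := (ih fun k hk => hv k (by omega)).factor_mul (-v m) (-(v m)⁻¹)
    rwa [neg_mul_neg, mul_inv_cancel₀ (hv m (by omega)), one_mul, ← VPoly_eq_factor]
      at h

lemma shape_UProdPoly_mul {u : ℕ → ℂ} {n N : ℕ} {M : Matrix (Fin 2) (Fin 2) ℂ[X]} {c : ℂ}
    (hu : ∀ k, k < n → u k ≠ 0) (hM : Shape M N c) :
    Shape (UProdPoly u n * M) (n + N) ((-1) ^ n * c) := by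
  induction n with
  | zero => simpa [UProdPoly] using hM
  | succ n ih =>
    have hsign : (-1 : ℂ) ^ (n + 1) * c = -u n * (u n)⁻¹ * ((-1) ^ n * c) := by
      rw [neg_mul, mul_inv_cancel₀ (hu n (by omega))]; ring
    rw [hsign, show n + 1 + N = n + N + 1 by omega, UProdPoly, mul_assoc, UPoly_eq_factor]
    exact (ih fun k hk => hu k (by omega)).factor_mul _ _

theorem lax_product_degree_structure_general (n m : ℕ) (u v : ℕ → ℂ)
    (hu : ∀ k, k < n → u k ≠ 0) (hv : ∀ k, k < m → v k ≠ 0) :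
    (∀ k : ℕ, n + m = 2 * k →
      ((UProdPoly u n * VProdPoly v m) 0 0).degree ≤ (k : ℕ) ∧
      ((UProdPoly u n * VProdPoly v m) 1 0).degree ≤ (k : ℕ) ∧
      ((UProdPoly u n * VProdPoly v m) 1 1).degree ≤ (k : ℕ) ∧
      ((UProdPoly u n * VProdPoly v m) 0 1).degree ≤ ((k - 1 : ℕ) : WithBot ℕ) ∧
      ((UProdPoly u n * VProdPoly v m) 0 0).coeff k *
        ((UProdPoly u n * VProdPoly v m) 1 1).coeff k = (-1 : ℂ) ^ m) ∧
    (∀ k : ℕ, n + m = 2 * k + 1 →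
      ((UProdPoly u n * VProdPoly v m) 0 0).degree ≤ (k : ℕ) ∧
      ((UProdPoly u n * VProdPoly v m) 0 1).degree ≤ (k : ℕ) ∧
      ((UProdPoly u n * VProdPoly v m) 1 1).degree ≤ (k : ℕ) ∧
      ((UProdPoly u n * VProdPoly v m) 1 0).degree ≤ ((k + 1 : ℕ) : WithBot ℕ) ∧
      ((UProdPoly u n * VProdPoly v m) 0 1).coeff k *
        ((UProdPoly u n * VProdPoly v m) 1 0).coeff (k + 1) = (-1 : ℂ) ^ (m + 1)) := by
  have hP := shape_UProdPoly_mul hu (shape_VProdPoly hv)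
  rw [mul_one] at hP
  constructor
  · intro k hk
    have h := hP.1 k hk
    refine ⟨h.degree_zero_zero, h.degree_one_zero, h.degree_one_one,
      degree_le_pred_of_lt h.degree_zero_one, ?_⟩
    rw [h.coeff_mul_coeff]
    exact neg_one_pow_congr (by rw [Nat.even_iff, Nat.even_iff]; omega)
  · intro k hk
    have h := hP.2 k hk
    refine ⟨h.degree_zero_zero, h.degree_zero_one, h.degree_one_one, h.degree_one_zero, ?_⟩
    rw [h.coeff_mul_coeff]
    exact neg_one_pow_congr (by rw [Nat.even_iff, Nat.even_iff]; omega)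

/-- Degree and leading-coefficient structure of the polynomial matrix
`P(λ) = U(λ; u_{n-1}) ⋯ U(λ; u_0) V(λ; v_{m-1}) ⋯ V(λ; v_0)`:
if `n + m = 2k` then the diagonal entries have degree `≤ k`, `P₂₁` has degree `≤ k`,
`P₁₂` has degree `≤ k - 1`, and the `λ^k`-coefficients of `P₁₁` and `P₂₂` multiply
to `(-1)^m`; if `n + m = 2k + 1` then `P₁₁, P₁₂, P₂₂` have degree `≤ k`, `P₂₁` has
degree `≤ k + 1`, and the `λ^k`-coefficient of `P₁₂` times the
`λ^{k+1}`-coefficient of `P₂₁` equals `(-1)^{m+1}`. -/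
theorem lax_product_degree_structure (n m : ℕ) (hnm : 1 ≤ n + m) (u v : ℕ → ℂ)
    (hu : ∀ k, k < n → u k ≠ 0) (hv : ∀ k, k < m → v k ≠ 0) :
    (∀ k : ℕ, n + m = 2 * k →
      ((UProdPoly u n * VProdPoly v m) 0 0).degree ≤ (k : ℕ) ∧
      ((UProdPoly u n * VProdPoly v m) 1 0).degree ≤ (k : ℕ) ∧
      ((UProdPoly u n * VProdPoly v m) 1 1).degree ≤ (k : ℕ) ∧
      ((UProdPoly u n * VProdPoly v m) 0 1).degree ≤ ((k - 1 : ℕ) : WithBot ℕ) ∧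
      ((UProdPoly u n * VProdPoly v m) 0 0).coeff k *
        ((UProdPoly u n * VProdPoly v m) 1 1).coeff k = (-1 : ℂ) ^ m) ∧
    (∀ k : ℕ, n + m = 2 * k + 1 →
      ((UProdPoly u n * VProdPoly v m) 0 0).degree ≤ (k : ℕ) ∧
      ((UProdPoly u n * VProdPoly v m) 0 1).degree ≤ (k : ℕ) ∧
      ((UProdPoly u n * VProdPoly v m) 1 1).degree ≤ (k : ℕ) ∧
      ((UProdPoly u n * VProdPoly v m) 1 0).degree ≤ ((k + 1 : ℕ) : WithBot ℕ) ∧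
      ((UProdPoly u n * VProdPoly v m) 0 1).coeff k *
        ((UProdPoly u n * VProdPoly v m) 1 0).coeff (k + 1) = (-1 : ℂ) ^ (m + 1)) :=
  lax_product_degree_structure_general n m u v hu hv
end

section
/- Let λ ∈ ℂ and let w ∈ ℂ with w ≠ 0 and w² = λ. Set U = [[1, −1],[λ, 1]], V = [[1, −i],[iλ, 1]], and Q = [[1, 1],[iw, −iw]] (2×2 complex matrices). Then Q is invertible, U = Q·diag(1 − iw, 1 + iw)·Q⁻¹, V = Q·diag(1 + w, 1 − w)·Q⁻¹, and consequently for all n, m ∈ ℕ: Uⁿ·Vᵐ = Q·diag((1 − iw)ⁿ(1 + w)ᵐ, (1 + iw)ⁿ(1 − w)ᵐ)·Q⁻¹. -/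
/-! The columns `(1, iw)` and `(1, -iw)` of `Q` are common eigenvectors of `U` and `V` once
`w² = λ`, and `det Q = -2iw ≠ 0`; conjugation by `Q` then carries powers and products of `U`
and `V` to those of diagonal matrices. -/

/-- The diagonalizing matrix `Q = [[1, 1], [iw, -iw]]`. -/
noncomputable def Qmat (w : ℂ) : Matrix (Fin 2) (Fin 2) ℂ :=
  !![1, 1; Complex.I * w, -(Complex.I * w)]

open Complex Matrix

theorem Units.conj_pow_mul_conj_pow {M : Type*} [Monoid M] (u : Mˣ) (a b : M) (n m : ℕ) :
    ((u : M) * a * ↑u⁻¹) ^ n * ((u : M) * b * ↑u⁻¹) ^ m = u * (a ^ n * b ^ m) * ↑u⁻¹ := by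
  rw [Units.conj_pow, Units.conj_pow]
  simp only [mul_assoc, Units.inv_mul_cancel_left]

theorem Matrix.diagonal_vec2_pow_mul_pow {R : Type*} [Semiring R] (a b c d : R) (n m : ℕ) :
    diagonal ![a, b] ^ n * diagonal ![c, d] ^ m = diagonal ![a ^ n * c ^ m, b ^ n * d ^ m] := by
  rw [diagonal_pow, diagonal_pow, diagonal_mul_diagonal]
  congr 1
  ext i
  fin_cases i <;> rfl

theorem det_Qmat (w : ℂ) : (Qmat w).det = -(2 * I * w) := by
  rw [Qmat, det_fin_two_of]
  ring

theorem isUnit_Qmat {w : ℂ} (hw : w ≠ 0) : IsUnit (Qmat w) := by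
  rw [isUnit_iff_isUnit_det, det_Qmat, isUnit_iff_ne_zero]
  simp [I_ne_zero, hw]

theorem laxU_mul_Qmat (w : ℂ) :
    !![1, -1; w ^ 2, 1] * Qmat w = Qmat w * diagonal ![1 - I * w, 1 + I * w] := by
  rw [Qmat, diagonal_vec2, mul_fin_two, mul_fin_two]
  simp only [EmbeddingLike.apply_eq_iff_eq, vecCons_inj, and_true]
  exact ⟨⟨by ring, by ring⟩, by linear_combination w ^ 2 * I_sq, by linear_combination w ^ 2 * I_sq⟩

theorem laxV_mul_Qmat (w : ℂ) :
    !![1, -I; I * w ^ 2, 1] * Qmat w = Qmat w * diagonal ![1 + w, 1 - w] := by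
  rw [Qmat, diagonal_vec2, mul_fin_two, mul_fin_two]
  simp only [EmbeddingLike.apply_eq_iff_eq, vecCons_inj, and_true]
  exact ⟨⟨by linear_combination (-w) * I_sq, by linear_combination w * I_sq⟩, by ring, by ring⟩

/-- Simultaneous diagonalization of the (commuting) Lax matrices
`U = [[1,-1],[λ,1]]` and `V = [[1,-i],[iλ,1]]` of the `a = 1` discrete power function,
where `w² = λ`, `w ≠ 0`; consequently
`UⁿVᵐ = Q·diag((1-iw)ⁿ(1+w)ᵐ, (1+iw)ⁿ(1-w)ᵐ)·Q⁻¹`. -/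
theorem lax_diagonalization_a_one (l w : ℂ) (hw : w ≠ 0) (hwl : w ^ 2 = l) :
    IsUnit (Qmat w) ∧
    (!![1, -1; l, 1] : Matrix (Fin 2) (Fin 2) ℂ) =
      Qmat w * Matrix.diagonal ![1 - Complex.I * w, 1 + Complex.I * w] * (Qmat w)⁻¹ ∧
    (!![1, -Complex.I; Complex.I * l, 1] : Matrix (Fin 2) (Fin 2) ℂ) =
      Qmat w * Matrix.diagonal ![1 + w, 1 - w] * (Qmat w)⁻¹ ∧
    ∀ n m : ℕ,
      (!![1, -1; l, 1] : Matrix (Fin 2) (Fin 2) ℂ) ^ n *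
          (!![1, -Complex.I; Complex.I * l, 1] : Matrix (Fin 2) (Fin 2) ℂ) ^ m =
        Qmat w *
          Matrix.diagonal ![(1 - Complex.I * w) ^ n * (1 + w) ^ m,
            (1 + Complex.I * w) ^ n * (1 - w) ^ m] * (Qmat w)⁻¹ := by
  subst hwl
  obtain ⟨u, hu⟩ := isUnit_Qmat hw
  have hU := (Units.eq_mul_inv_iff_mul_eq u).2 (hu ▸ laxU_mul_Qmat w)
  have hV := (Units.eq_mul_inv_iff_mul_eq u).2 (hu ▸ laxV_mul_Qmat w)
  rw [← hu, ← coe_units_inv]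
  refine ⟨u.isUnit, hU, hV, fun n m => ?_⟩
  rw [hU, hV, Units.conj_pow_mul_conj_pow, diagonal_vec2_pow_mul_pow]
end

section
/- Let f : ℂ → ℂ, let z ∈ ℂ, and suppose f is complex-differentiable at z with f′(z) ≠ 0. Then, as the real parameter ε tends to 0 through nonzero values, the quantity (f(z) − f(z+ε))·(f(z+ε+iε) − f(z+iε)) / ((f(z+ε) − f(z+ε+iε))·(f(z+iε) − f(z))) is eventually defined (its denominator is nonzero for all sufficiently small nonzero real ε) and tends to −1. -/
/-!
Each side `f(p) - f(q)` of the image of the square is `d (p - q) + o(ε)`. Dividing all four sides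
by `ε` therefore leaves the cross-ratio unchanged, and in the limit it becomes the cross-ratio of
the sides of the square scaled by `d`, namely `(-d)(d) / ((-i d)(i d)) = -1`.
-/

open Filter Topology Complex

theorem HasDerivAt.hasDerivAt_comp_add_mul_ofReal {f : ℂ → ℂ} {d z : ℂ} (hf : HasDerivAt f d z)
    (a : ℂ) : HasDerivAt (fun t : ℝ => f (z + a * t)) (d * a) 0 := by
  have hline : HasDerivAt (fun w : ℂ => z + a * w) a ((0 : ℝ) : ℂ) := by
    simpa using ((hasDerivAt_id _).const_mul a).const_add z
  exact (hf.comp_of_eq _ hline (by simp)).comp_ofReal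

theorem HasDerivAt.tendsto_sub_div_ofReal {f : ℂ → ℂ} {d z : ℂ} (hf : HasDerivAt f d z)
    (a b : ℂ) :
    Tendsto (fun ε : ℝ => (f (z + a * ε) - f (z + b * ε)) / ε) (𝓝[≠] 0) (𝓝 (d * (a - b))) := by
  have h := ((hf.hasDerivAt_comp_add_mul_ofReal a).sub
    (hf.hasDerivAt_comp_add_mul_ofReal b)).tendsto_slope_zero
  rw [← mul_sub] at h
  refine h.congr fun ε => ?_
  simp [Complex.real_smul, div_eq_inv_mul]

theorem tendsto_mul_div_mul_of_tendsto_div {α K : Type*} [Field K] [TopologicalSpace K]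
    [IsTopologicalDivisionRing K] [T1Space K] {l : Filter α} {s A B C E : α → K} {a b c e : K}
    (hs : ∀ᶠ x in l, s x ≠ 0) (hA : Tendsto (fun x => A x / s x) l (𝓝 a))
    (hB : Tendsto (fun x => B x / s x) l (𝓝 b)) (hC : Tendsto (fun x => C x / s x) l (𝓝 c))
    (hE : Tendsto (fun x => E x / s x) l (𝓝 e)) (hce : c * e ≠ 0) :
    (∀ᶠ x in l, C x * E x ≠ 0) ∧
      Tendsto (fun x => A x * B x / (C x * E x)) l (𝓝 (a * b / (c * e))) := by
  have hrescale : ∀ᶠ x in l,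
      A x / s x * (B x / s x) / (C x / s x * (E x / s x)) = A x * B x / (C x * E x) := by
    filter_upwards [hs] with x hx
    rw [div_mul_div_comm, div_mul_div_comm, div_div_div_cancel_right₀ (mul_ne_zero hx hx)]
  refine ⟨?_, ((hA.mul hB).div (hC.mul hE) hce).congr' hrescale⟩
  filter_upwards [hs, (hC.mul hE).eventually_ne hce] with x hx hCE
  intro h
  exact hCE (by rw [div_mul_div_comm, h, zero_div])

/-- For a map `f` complex-differentiable at `z` with nonvanishing derivative, the
cross-ratio of the images of the four vertices `z, z+ε, z+ε+iε, z+iε` of a small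
square is eventually defined and tends to `-1` as the real parameter `ε → 0`,
`ε ≠ 0`. -/
theorem crossRatio_tendsto_neg_one (f : ℂ → ℂ) (z : ℂ) (d : ℂ)
    (hf : HasDerivAt f d z) (hd : d ≠ 0) :
    (∀ᶠ ε : ℝ in nhdsWithin 0 {x : ℝ | x ≠ 0},
      (f (z + (ε : ℂ)) - f (z + (ε : ℂ) + Complex.I * (ε : ℂ))) *
        (f (z + Complex.I * (ε : ℂ)) - f z) ≠ 0) ∧
    Tendsto (fun ε : ℝ =>
        (f z - f (z + (ε : ℂ))) *
            (f (z + (ε : ℂ) + Complex.I * (ε : ℂ)) - f (z + Complex.I * (ε : ℂ))) /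
          ((f (z + (ε : ℂ)) - f (z + (ε : ℂ) + Complex.I * (ε : ℂ))) *
            (f (z + Complex.I * (ε : ℂ)) - f z)))
      (nhdsWithin 0 {x : ℝ | x ≠ 0}) (nhds (-1)) := by
  have hvertex : ∀ ε : ℝ, z + (ε : ℂ) + I * ε = z + (1 + I) * ε := fun ε => by ring
  have hA := hf.tendsto_sub_div_ofReal 0 1
  have hB := hf.tendsto_sub_div_ofReal (1 + I) I
  have hC := hf.tendsto_sub_div_ofReal 1 (1 + I)
  have hE := hf.tendsto_sub_div_ofReal I 0
  simp only [zero_mul, add_zero, one_mul] at hA hB hC hE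
  simp only [hvertex]
  have hden : d * (1 - (1 + I)) * (d * (I - 0)) ≠ 0 := by simp [hd, I_ne_zero]
  have hlim : d * (0 - 1) * (d * (1 + I - I)) / (d * (1 - (1 + I)) * (d * (I - 0))) = -1 := by
    rw [div_eq_iff hden]
    linear_combination (-d ^ 2) * I_sq
  rw [← hlim]
  refine tendsto_mul_div_mul_of_tendsto_div ?_ hA hB hC hE hden
  filter_upwards [self_mem_nhdsWithin] with ε hε using ofReal_ne_zero.mpr hε
end

section
/- Let f : ℂ → ℂ, let z = x + i·y with x, y ∈ ℝ, and suppose f is complex-differentiable at z with f′(z) ≠ 0. Then, as the real parameter ε tends to 0 through nonzero values, the quantity 2·(x/ε)·(f(z+ε) − f(z))·(f(z) − f(z−ε))/(f(z+ε) − f(z−ε)) + 2·(y/ε)·(f(z+iε) − f(z))·(f(z) − f(z−iε))/(f(z+iε) − f(z−iε)) is eventually defined (both denominators are nonzero for all sufficiently small nonzero real ε) and tends to z·f′(z). -/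
/-!
With `A = f(z + cε) - f(z)` and `B = f(z) - f(z - cε)`, the quantity `2AB/(ε(A + B))` is the
harmonic mean of the one-sided difference quotients `A/ε` and `B/ε`. Both tend to `c·f'(z)`, and
the harmonic mean is continuous at a nonzero diagonal point, so the two terms tend to
`x·f'(z)` and `y·i·f'(z)`, whose sum is `z·f'(z)`.
-/

open Filter Topology

section HarmonicMean

variable {𝕜 α : Type*} [NormedField 𝕜] [CharZero 𝕜] {l : Filter α} {a b : α → 𝕜} {w : 𝕜}

theorem Filter.Tendsto.harmonic_mean (ha : Tendsto a l (𝓝 w)) (hb : Tendsto b l (𝓝 w))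
    (hw : w ≠ 0) : Tendsto (fun t => 2 * (a t * b t) / (a t + b t)) l (𝓝 w) := by
  have hww : w + w ≠ 0 := by rw [← two_mul]; exact mul_ne_zero two_ne_zero hw
  have h := (tendsto_const_nhds (x := (2 : 𝕜)).mul (ha.mul hb)).div (ha.add hb) hww
  rwa [show 2 * (w * w) / (w + w) = w by field_simp; ring] at h

end HarmonicMean

namespace HasDerivAt

variable {f : ℂ → ℂ} {z d : ℂ}

theorem tendsto_forward_quotient_ofReal (hf : HasDerivAt f d z) (c : ℂ) :
    Tendsto (fun ε : ℝ => (f (z + c * ε) - f z) / ε) (𝓝[≠] 0) (𝓝 (c * d)) := by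
  have hline : HasDerivAt (fun w : ℂ => f (z + c * w)) (d * c) 0 := by
    have h := ((hasDerivAt_id (0 : ℂ)).const_mul c).const_add z
    simp only [mul_one] at h
    exact hf.comp_of_eq 0 h (by simp)
  have hslope := hasDerivAt_iff_tendsto_slope.mp hline.comp_ofReal
  rw [mul_comm c d]
  refine hslope.congr fun ε => ?_
  simp [slope_def_module, Complex.real_smul, div_eq_inv_mul]

theorem tendsto_backward_quotient_ofReal (hf : HasDerivAt f d z) (c : ℂ) :
    Tendsto (fun ε : ℝ => (f z - f (z - c * ε)) / ε) (𝓝[≠] 0) (𝓝 (c * d)) := by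
  have h := (hf.tendsto_forward_quotient_ofReal (-c)).neg
  rw [neg_mul, neg_neg] at h
  refine h.congr fun ε => ?_
  rw [neg_mul, ← sub_eq_add_neg, ← neg_div, neg_sub]

theorem tendsto_central_quotient_ofReal (hf : HasDerivAt f d z) (c : ℂ) :
    Tendsto (fun ε : ℝ => (f (z + c * ε) - f (z - c * ε)) / ε) (𝓝[≠] 0)
      (𝓝 (c * d + c * d)) := by
  refine ((hf.tendsto_forward_quotient_ofReal c).add
    (hf.tendsto_backward_quotient_ofReal c)).congr fun ε => ?_
  rw [← add_div, sub_add_sub_cancel]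

theorem eventually_central_difference_ne_zero (hf : HasDerivAt f d z) {c : ℂ}
    (hcd : c * d ≠ 0) : ∀ᶠ ε : ℝ in 𝓝[≠] 0, f (z + c * ε) - f (z - c * ε) ≠ 0 := by
  have hlim : c * d + c * d ≠ 0 := by rw [← two_mul]; exact mul_ne_zero two_ne_zero hcd
  filter_upwards [(hf.tendsto_central_quotient_ofReal c).eventually_ne hlim] with ε hε h0
  exact hε (by rw [h0, zero_div])

theorem tendsto_harmonic_quotient_ofReal (hf : HasDerivAt f d z) {c : ℂ} (hcd : c * d ≠ 0) :
    Tendsto (fun ε : ℝ => 2 * ((f (z + c * ε) - f z) * (f z - f (z - c * ε))) /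
        (ε * (f (z + c * ε) - f (z - c * ε)))) (𝓝[≠] 0) (𝓝 (c * d)) := by
  refine ((hf.tendsto_forward_quotient_ofReal c).harmonic_mean
    (hf.tendsto_backward_quotient_ofReal c) hcd).congr' ?_
  filter_upwards [self_mem_nhdsWithin] with ε (hε : ε ≠ 0)
  have hε' : (ε : ℂ) ≠ 0 := Complex.ofReal_ne_zero.mpr hε
  rw [← add_div, sub_add_sub_cancel]
  field_simp

end HasDerivAt

/-- The continuous limit of the right-hand side of the nonautonomous constraint:
for `f` complex-differentiable at `z = x + iy` with `f'(z) ≠ 0`, the quantity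
`2(x/ε)(f(z+ε)-f(z))(f(z)-f(z-ε))/(f(z+ε)-f(z-ε)) +
 2(y/ε)(f(z+iε)-f(z))(f(z)-f(z-iε))/(f(z+iε)-f(z-iε))`
is eventually defined and tends to `z·f'(z)` as the real parameter `ε → 0`, `ε ≠ 0`. -/
theorem constraint_continuous_limit (f : ℂ → ℂ) (x y : ℝ) (z : ℂ)
    (hz : z = (x : ℂ) + Complex.I * (y : ℂ)) (d : ℂ)
    (hf : HasDerivAt f d z) (hd : d ≠ 0) :
    (∀ᶠ ε : ℝ in nhdsWithin 0 {t : ℝ | t ≠ 0},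
      f (z + (ε : ℂ)) - f (z - (ε : ℂ)) ≠ 0 ∧
      f (z + Complex.I * (ε : ℂ)) - f (z - Complex.I * (ε : ℂ)) ≠ 0) ∧
    Tendsto (fun ε : ℝ =>
        2 * ((x : ℂ) / (ε : ℂ)) *
            ((f (z + (ε : ℂ)) - f z) * (f z - f (z - (ε : ℂ)))) /
            (f (z + (ε : ℂ)) - f (z - (ε : ℂ))) +
          2 * ((y : ℂ) / (ε : ℂ)) *
            ((f (z + Complex.I * (ε : ℂ)) - f z) * (f z - f (z - Complex.I * (ε : ℂ)))) /
            (f (z + Complex.I * (ε : ℂ)) - f (z - Complex.I * (ε : ℂ))))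
      (nhdsWithin 0 {t : ℝ | t ≠ 0}) (nhds (z * d)) := by
  have hreal : 1 * d ≠ 0 := by rwa [one_mul]
  have himag : Complex.I * d ≠ 0 := mul_ne_zero Complex.I_ne_zero hd
  refine ⟨?_, ?_⟩
  · have h := hf.eventually_central_difference_ne_zero hreal
    simp only [one_mul] at h
    exact h.and (hf.eventually_central_difference_ne_zero himag)
  · have h := ((hf.tendsto_harmonic_quotient_ofReal hreal).const_mul (x : ℂ)).add
      ((hf.tendsto_harmonic_quotient_ofReal himag).const_mul (y : ℂ))
    simp only [one_mul] at h
    rw [show (x : ℂ) * d + y * (Complex.I * d) = z * d by rw [hz]; ring] at h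
    refine h.congr fun ε => ?_
    simp only [div_eq_mul_inv, mul_inv]
    ring
end
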